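/- arXiv:1602.09052 — 5 statements merged into one kernel-verified Lean document; each statement's English description precedes it below -/
import Mathlib

section
/- For every finite graph G and every r ∈ ℕ, wcol_r(G) ≤ (col_r(G))^r. -/
/-!
Fix an order `L` realising `col_r(G)`. If `u` is weakly `s`-reachable from `v` along a path `P`
and `u ≠ v`, let `x` be the least vertex of `P` other than `u`. The segment of `P` from `v` to `x`
is strictly shorter and has `x` as its minimum, so `x` is weakly `(s - 1)`-reachable from `v`;
the segment from `x` to `u` has all its interior vertices above `x`, so `u` is strongly
`r`-reachable from `x`. By induction every weakly `r`-reachable vertex is reached from `v` by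
`r` successive strong-reachability steps, which leaves at most `col_r(G) ^ r` candidates.
-/

open SimpleGraph

variable {V : Type} [Fintype V]

def WReach (G : SimpleGraph V) (L : LinearOrder V) (r : ℕ) (v : V) : Set V :=
  {u | ∃ p : G.Walk v u, p.IsPath ∧ p.length ≤ r ∧ ∀ w ∈ p.support, L.le u w}

def SReach (G : SimpleGraph V) (L : LinearOrder V) (r : ℕ) (v : V) : Set V :=
  {u | ∃ p : G.Walk v u, p.IsPath ∧ p.length ≤ r ∧ L.le u v ∧
    ∀ w ∈ p.support, w ≠ u → w ≠ v → L.lt v w}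

noncomputable def wcol (G : SimpleGraph V) (r : ℕ) : ℕ :=
  sInf {k | ∃ L : LinearOrder V, ∀ v, (WReach G L r v).ncard ≤ k}

noncomputable def col (G : SimpleGraph V) (r : ℕ) : ℕ :=
  sInf {k | ∃ L : LinearOrder V, ∀ v, (SReach G L r v).ncard ≤ k}

lemma Set.ncard_biUnion_le_ncard_mul {α ι : Type*} {t : Set ι} (ht : t.Finite)
    {s : ι → Set α} {k : ℕ} (hs : ∀ i ∈ t, (s i).ncard ≤ k) :
    (⋃ i ∈ t, s i).ncard ≤ t.ncard * k := by
  have hsum := ht.toFinset.set_ncard_biUnion_le s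
  simp only [Set.Finite.mem_toFinset] at hsum
  calc _ ≤ ∑ i ∈ ht.toFinset, (s i).ncard := hsum
    _ ≤ ht.toFinset.card * k := Finset.sum_le_card_nsmul _ _ _ (by simpa using hs)
    _ = t.ncard * k := by rw [Set.ncard_eq_toFinset_card t ht]

section Reach

omit [Fintype V]

variable (G : SimpleGraph V) (L : LinearOrder V)

lemma self_mem_WReach (r : ℕ) (v : V) : v ∈ WReach G L r v :=
  ⟨.nil, .nil, Nat.zero_le r, by simp⟩

lemma self_mem_SReach (r : ℕ) (v : V) : v ∈ SReach G L r v :=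
  ⟨.nil, .nil, Nat.zero_le r, le_rfl, by simp⟩

lemma WReach_zero (v : V) : WReach G L 0 v = {v} := by
  refine Set.eq_singleton_iff_unique_mem.mpr ⟨self_mem_WReach G L 0 v, ?_⟩
  rintro u ⟨p, -, hlen, -⟩
  exact (Walk.eq_of_length_eq_zero (Nat.le_zero.mp hlen)).symm

lemma SReach_mono {r r' : ℕ} (h : r ≤ r') (v : V) : SReach G L r v ⊆ SReach G L r' v := by
  rintro u ⟨p, hp, hlen, huv, hint⟩
  exact ⟨p, hp, hlen.trans h, huv, hint⟩

lemma WReach_succ_subset (s : ℕ) (v : V) :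
    WReach G L (s + 1) v ⊆ ⋃ x ∈ WReach G L s v, SReach G L (s + 1) x := by
  classical
  let _ := L
  rintro u ⟨p, hp, hlen, hmin⟩
  simp only [Set.mem_iUnion₂, exists_prop]
  by_cases hvu : v = u
  · subst hvu
    exact ⟨v, self_mem_WReach G L s v, self_mem_SReach G L (s + 1) v⟩
  obtain ⟨x, hxP, hxmin⟩ := (p.support.toFinset.erase u).exists_min_image id
    ⟨v, by simp [hvu, p.start_mem_support]⟩
  obtain ⟨hxu, hx⟩ : x ≠ u ∧ x ∈ p.support := by simpa using hxP
  have hx_le : ∀ w ∈ p.support, w ≠ u → x ≤ w := fun w hw hwu =>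
    hxmin w (by simp [hw, hwu])
  refine ⟨x, ⟨p.takeUntil x hx, hp.takeUntil hx, ?_, fun w hw => ?_⟩,
    ⟨p.dropUntil x hx, hp.dropUntil hx, (p.length_dropUntil_le_length hx).trans hlen,
      hmin x hx, fun w hw hwu hwx => ?_⟩⟩
  · have := p.length_takeUntil_lt_length hx hxu
    omega
  · refine hx_le w (p.support_takeUntil_subset_support hx hw) ?_
    rintro rfl
    exact Walk.endpoint_notMem_support_takeUntil hp hx hxu.symm hw
  · exact lt_of_le_of_ne (hx_le w (p.support_dropUntil_subset_support hx hw) hwu) (Ne.symm hwx)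

lemma ncard_WReach_le_pow [Finite V] {r k : ℕ} (hk : ∀ w, (SReach G L r w).ncard ≤ k)
    {s : ℕ} (hs : s ≤ r) (v : V) : (WReach G L s v).ncard ≤ k ^ s := by
  induction s with
  | zero => simp [WReach_zero]
  | succ s ih =>
    have hsub : WReach G L (s + 1) v ⊆ ⋃ x ∈ WReach G L s v, SReach G L r x :=
      (WReach_succ_subset G L s v).trans <|
        Set.biUnion_mono subset_rfl fun x _ => SReach_mono G L hs x
    calc (WReach G L (s + 1) v).ncard ≤ (⋃ x ∈ WReach G L s v, SReach G L r x).ncard :=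
          Set.ncard_le_ncard hsub (Set.toFinite _)
      _ ≤ (WReach G L s v).ncard * k :=
          Set.ncard_biUnion_le_ncard_mul (Set.toFinite _) fun x _ => hk x
      _ ≤ k ^ s * k := Nat.mul_le_mul_right k (ih (by omega))
      _ = k ^ (s + 1) := (pow_succ k s).symm

end Reach

lemma exists_linearOrder_ncard_SReach_le_col (G : SimpleGraph V) (r : ℕ) :
    ∃ L : LinearOrder V, ∀ v, (SReach G L r v).ncard ≤ col G r :=
  Nat.sInf_mem (s := {k | ∃ L : LinearOrder V, ∀ v, (SReach G L r v).ncard ≤ k})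
    ⟨Nat.card V, LinearOrder.lift' _ (Fintype.equivFin V).injective, fun _ => Set.ncard_le_card _⟩

theorem wcol_le_col_pow (G : SimpleGraph V) (r : ℕ) : wcol G r ≤ (col G r) ^ r := by
  obtain ⟨L, hL⟩ := exists_linearOrder_ncard_SReach_le_col G r
  exact Nat.sInf_le ⟨L, ncard_WReach_le_pow G L hL le_rfl⟩
end

section
/- If G is a finite forest (contains no cycle), then col_r(G) ≤ 2 for every r ≥ 1. -/
open SimpleGraph

variable {V : Type} [Fintype V]

/-! Root every component of the forest and order the vertices by depth, i.e. by distance from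
the root. Each vertex has at most one neighbour of smaller depth, its parent, so a path that steps
from `v` down to a child can never climb back above that child: it stays in the subtree of `v` and
ends at a vertex deeper than `v`. A path from `v` whose first step goes up reaches the parent,
which precedes `v` and therefore must already be the end of the path. Hence
`SReach_r[G, L, v] ⊆ {v, parent v}` for every `r`. -/

namespace SimpleGraph

section Forest

variable {W : Type*} {G : SimpleGraph W}

theorem IsAcyclic.dist_eq_add_one_or_of_adj (hG : G.IsAcyclic) {x a b : W} (hab : G.Adj a b)
    (hxa : G.Reachable x a) : G.dist x b = G.dist x a + 1 ∨ G.dist x a = G.dist x b + 1 := by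
  obtain ⟨p, hp, hpl⟩ := hxa.exists_path_of_dist
  obtain ⟨q, hq, hql⟩ := (hxa.trans hab.reachable).exists_path_of_dist
  rw [← hpl, ← hql]
  by_cases ha : a ∈ q.support
  · left
    rw [hG.path_concat hp hq hab ha, Walk.length_concat]
  · right
    have hb := hG.mem_support_of_ne_mem_support_of_adj_of_isPath hp hq hab ha
    rw [hG.path_concat hq hp hab.symm hb, Walk.length_concat]

theorem IsAcyclic.eq_penultimate_of_dist_add_one (hG : G.IsAcyclic) {x v a : W} {p : G.Walk x v}
    (hp : p.IsPath) (hva : G.Adj v a) (hd : G.dist x a + 1 = G.dist x v) : a = p.penultimate := by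
  obtain ⟨q, hq, hql⟩ := (p.reachable.trans hva.reachable).exists_path_of_dist
  have hv : v ∉ q.support := fun hv ↦ by
    have := congrArg Walk.length (hG.path_concat hp hq hva hv)
    rw [Walk.length_concat, hql] at this
    have := G.dist_le p
    omega
  exact hG.eq_penultimate_of_adj_end hp hva
    (hG.mem_support_of_ne_mem_support_of_adj_of_isPath hp hq hva hv)

noncomputable def depth (G : SimpleGraph W) (v : W) : ℕ := G.dist (G.connectedComponentMk v).out v

theorem reachable_out_connectedComponentMk (v : W) : G.Reachable (G.connectedComponentMk v).out v :=
  ConnectedComponent.exact (Quot.out_eq _)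

theorem depth_eq_dist_of_reachable {u v : W} (h : G.Reachable u v) :
    G.depth v = G.dist (G.connectedComponentMk u).out v := by
  rw [depth, ConnectedComponent.sound h]

theorem IsAcyclic.depth_eq_add_one_or_of_adj (hG : G.IsAcyclic) {a b : W} (hab : G.Adj a b) :
    G.depth b = G.depth a + 1 ∨ G.depth a = G.depth b + 1 := by
  rw [G.depth_eq_dist_of_reachable hab.reachable]
  exact hG.dist_eq_add_one_or_of_adj hab (G.reachable_out_connectedComponentMk a)

theorem IsAcyclic.eq_of_adj_of_depth_add_one (hG : G.IsAcyclic) {v a b : W} (ha : G.Adj v a)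
    (hb : G.Adj v b) (hda : G.depth a + 1 = G.depth v) (hdb : G.depth b + 1 = G.depth v) :
    a = b := by
  rw [G.depth_eq_dist_of_reachable ha.reachable] at hda
  rw [G.depth_eq_dist_of_reachable hb.reachable] at hdb
  obtain ⟨p, hp, -⟩ := (G.reachable_out_connectedComponentMk v).exists_path_of_dist
  rw [hG.eq_penultimate_of_dist_add_one hp ha hda, hG.eq_penultimate_of_dist_add_one hp hb hdb]

theorem IsAcyclic.depth_lt_of_isPath_of_not_mem_support (hG : G.IsAcyclic) {a u b : W}
    {p : G.Walk a u} (hp : p.IsPath) (hba : G.Adj b a) (hd : G.depth a = G.depth b + 1)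
    (hb : b ∉ p.support) : G.depth b < G.depth u := by
  induction p generalizing b with
  | nil => omega
  | @cons a c u hac q ih =>
    rw [Walk.cons_isPath_iff] at hp
    rcases hG.depth_eq_add_one_or_of_adj hac with hc | hc
    · have := ih hp.1 hac hc hp.2
      omega
    · have hcb : c = b := hG.eq_of_adj_of_depth_add_one hac hba.symm hc.symm hd.symm
      exact (hb (by simp [← hcb])).elim

end Forest

@[reducible]
noncomputable def depthOrder {W : Type*} [Fintype W] (G : SimpleGraph W) : LinearOrder W :=
  LinearOrder.lift' (fun v ↦ toLex (G.depth v, Fintype.equivFin W v))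
    fun _ _ h ↦ (Fintype.equivFin W).injective (congrArg (fun p ↦ (ofLex p).2) h)

theorem depth_le_of_depthOrder_le {W : Type*} [Fintype W] {G : SimpleGraph W} {u v : W}
    (h : G.depthOrder.le u v) : G.depth u ≤ G.depth v :=
  Prod.Lex.monotone_fst _ _ h

theorem IsAcyclic.eq_or_adj_of_mem_sReach {G : SimpleGraph V} (hG : G.IsAcyclic) {r : ℕ} {v u : V}
    (hu : u ∈ SReach G G.depthOrder r v) : u = v ∨ G.Adj v u ∧ G.depth u + 1 = G.depth v := by
  let _ : LinearOrder V := G.depthOrder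
  obtain ⟨p, hp, -, hle, hint⟩ := hu
  cases p with
  | nil => exact .inl rfl
  | @cons _ c _ hvc q =>
    rw [Walk.cons_isPath_iff] at hp
    rcases hG.depth_eq_add_one_or_of_adj hvc with hc | hc
    · have := hG.depth_lt_of_isPath_of_not_mem_support hp.1 hvc hc hp.2
      have := depth_le_of_depthOrder_le hle
      omega
    · cases q with
      | nil => exact .inr ⟨hvc, hc.symm⟩
      | cons _ _ =>
        have hcu : c ≠ u := by
          rintro rfl
          exact (Walk.cons_isPath_iff _ _).mp hp.1 |>.2 (Walk.end_mem_support _)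
        have := depth_le_of_depthOrder_le (hint c (by simp) hcu hvc.ne').le
        omega

theorem IsAcyclic.ncard_sReach_depthOrder_le_two {G : SimpleGraph V} (hG : G.IsAcyclic) (r : ℕ)
    (v : V) : (SReach G G.depthOrder r v).ncard ≤ 2 := by
  have hparent : {u | G.Adj v u ∧ G.depth u + 1 = G.depth v}.Subsingleton :=
    fun a ha b hb ↦ hG.eq_of_adj_of_depth_add_one ha.1 hb.1 ha.2 hb.2
  calc (SReach G G.depthOrder r v).ncard
      ≤ (insert v {u | G.Adj v u ∧ G.depth u + 1 = G.depth v}).ncard :=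
        Set.ncard_le_ncard (fun _ hu ↦ hG.eq_or_adj_of_mem_sReach hu) (Set.toFinite _)
    _ ≤ {u | G.Adj v u ∧ G.depth u + 1 = G.depth v}.ncard + 1 := Set.ncard_insert_le _ _
    _ ≤ 2 := by
      have := Set.ncard_le_one_iff_subsingleton.mpr hparent
      omega

end SimpleGraph

theorem col_le_two_of_acyclic_general (G : SimpleGraph V) (hG : G.IsAcyclic) (r : ℕ) :
    col G r ≤ 2 :=
  Nat.sInf_le ⟨G.depthOrder, hG.ncard_sReach_depthOrder_le_two r⟩

theorem col_le_two_of_acyclic (G : SimpleGraph V) (hG : G.IsAcyclic) (r : ℕ) (hr : 1 ≤ r) :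
    col G r ≤ 2 :=
  col_le_two_of_acyclic_general G hG r
end

section
/- Let G be a finite graph and L a linear order on V(G) with elimination width at most k (i.e., the fill-in graph G_L has clique number at most k+1). Then for every r ∈ ℕ and every vertex v, |WReach_r[G,L,v]| ≤ C(r+k, k), the binomial coefficient. -/
open SimpleGraph

variable {V : Type} [Fintype V]

/-- `u` is strongly reachable (any length) from `v`: a path from `v` to `u`
whose internal vertices are all strictly greater than `v`. -/
def StrongRel (G : SimpleGraph V) (L : LinearOrder V) (v u : V) : Prop :=
  ∃ p : G.Walk v u, p.IsPath ∧ ∀ x ∈ p.support, x ≠ u → x ≠ v → L.lt v x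

/-- The fill-in of `G` with respect to a linear order `L`. -/
def fillIn (G : SimpleGraph V) (L : LinearOrder V) : SimpleGraph V where
  Adj u w := u ≠ w ∧ ((L.lt u w ∧ StrongRel G L w u) ∨ (L.lt w u ∧ StrongRel G L u w))
  symm := by constructor; intro u w h; exact ⟨h.1.symm, h.2.symm⟩
  loopless := by constructor; intro u h; exact h.1 rfl

/-
Let `N x` be the set of vertices `y < x` strongly reachable from `x`; these are the smaller fill-in
neighbours of `x`, so `|N x| ≤ k`, and since two of them `z < y` are joined through `x`, also
`z ∈ N y`. A path from `v` to a weakly reachable `u` can be shortcut to a decreasing chain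
`v = x₀ > x₁ > ⋯ > u` with `x_{i+1} ∈ N x_i` and no more steps. Record each step by the rank of
`x_{i+1}` in `N x_i`. If two consecutive ranks decrease, the elements of `N x_i` below `x_{i+1}`,
all lying in `N x_{i+1}`, force either a shortcut or a detour through a vertex of smaller rank; so
every endpoint is reached by a chain with nondecreasing ranks. These are at most `r` nondecreasing
ranks below `k`, of which there are `(r + k).choose k`.
-/

open Finset

section

variable {W : Type*} [LinearOrder W]

def rankIn (s : Finset W) (y : W) : ℕ := #{z ∈ s | z < y}

theorem rankIn_lt_card {s : Finset W} {y : W} (hy : y ∈ s) : rankIn s y < #s :=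
  card_lt_card <| (ssubset_iff_of_subset (filter_subset _ _)).2 ⟨y, hy, by simp⟩

theorem rankIn_strictMonoOn (s : Finset W) : StrictMonoOn (rankIn s) s := by
  intro z hz y _ hzy
  refine card_lt_card <|
    (ssubset_iff_of_subset fun a ha => ?_).2 ⟨z, mem_filter.2 ⟨hz, hzy⟩, by simp⟩
  simp only [mem_filter] at ha ⊢
  exact ⟨ha.1, ha.2.trans hzy⟩

/-- `SortedReach N r j v u`: `u` is reached from `v` by at most `r` steps `x ↦ y ∈ N x` whose ranks
`rankIn (N x) y` form a nondecreasing sequence bounded below by `j`. -/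
inductive SortedReach (N : W → Finset W) : ℕ → ℕ → W → W → Prop
  | refl (r j : ℕ) (v : W) : SortedReach N r j v v
  | cons {r j : ℕ} {v y u : W} (hy : y ∈ N v) (hj : j ≤ rankIn (N v) y)
      (h : SortedReach N r (rankIn (N v) y) y u) : SortedReach N (r + 1) j v u

namespace SortedReach

variable {N : W → Finset W} {r j : ℕ} {v u : W}

theorem mono {r' j' : ℕ} (h : SortedReach N r j v u) (hr : r ≤ r') (hj : j' ≤ j) :
    SortedReach N r' j' v u := by
  induction h generalizing r' j' with
  | refl => exact .refl _ _ _
  | cons hy hj' _ ih =>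
    cases r' with
    | zero => omega
    | succ r' => exact .cons hy (hj.trans hj') (ih (by omega) le_rfl)

theorem eq_of_zero (h : SortedReach N 0 j v u) : u = v := by
  cases h; rfl

theorem eq_of_card_le {k : ℕ} (hk : ∀ x, #(N x) ≤ k) (hj : k ≤ j) (h : SortedReach N r j v u) :
    u = v := by
  cases h with
  | refl => rfl
  | cons hy hj' _ => have := rankIn_lt_card hy; have := hk v; omega

theorem succ_cases (h : SortedReach N (r + 1) j v u) :
    SortedReach N (r + 1) (j + 1) v u ∨
      ∃ y ∈ N v, rankIn (N v) y = j ∧ SortedReach N r j y u := by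
  cases h with
  | refl => exact .inl (.refl _ _ _)
  | cons hy hj h =>
    rcases hj.eq_or_lt with rfl | hlt
    · exact .inr ⟨_, hy, rfl, h⟩
    · exact .inl (.cons hy hlt h)

theorem encard_setOf_le {k : ℕ} (hk : ∀ x, #(N x) ≤ k) (r j : ℕ) (v : W) :
    {u | SortedReach N r j v u}.encard ≤ (r + (k - j)).choose (k - j) := by
  induction r generalizing j v with
  | zero =>
    calc _ ≤ ({v} : Set W).encard := Set.encard_le_encard fun u hu => hu.eq_of_zero
      _ = _ := by simp
  | succ r ih =>
    obtain ⟨m, hm⟩ : ∃ m, k - j = m := ⟨_, rfl⟩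
    induction m generalizing j with
    | zero =>
      calc _ ≤ ({v} : Set W).encard :=
            Set.encard_le_encard fun u hu => hu.eq_of_card_le hk (by omega)
        _ = _ := by simp [hm]
    | succ m ihm =>
      have hnext := ihm (j + 1) (by omega)
      have hfirst : {u | ∃ y ∈ N v, rankIn (N v) y = j ∧ SortedReach N r j y u}.encard ≤
          (r + (m + 1)).choose (m + 1) := by
        by_cases hex : ∃ y ∈ N v, rankIn (N v) y = j
        · obtain ⟨y, hy, hyj⟩ := hex
          refine (Set.encard_le_encard ?_).trans (hm ▸ ih j y)
          rintro u ⟨y', hy', hy'j, h⟩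
          rwa [(rankIn_strictMonoOn _).injOn hy' hy (hy'j.trans hyj.symm)] at h
        · refine (Set.encard_eq_zero.2 (Set.eq_empty_of_forall_notMem ?_)).trans_le zero_le
          rintro u ⟨y, hy, hyj, -⟩
          exact hex ⟨y, hy, hyj⟩
      calc _ ≤ ({u | SortedReach N (r + 1) (j + 1) v u} ∪
              {u | ∃ y ∈ N v, rankIn (N v) y = j ∧ SortedReach N r j y u}).encard :=
            Set.encard_le_encard fun u hu => hu.succ_cases
        _ ≤ _ := Set.encard_union_le _ _
        _ ≤ ((r + 1 + m).choose m : ℕ∞) + (r + (m + 1)).choose (m + 1) := by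
            rw [show k - (j + 1) = m by omega] at hnext
            exact add_le_add hnext hfirst
        _ = (r + 1 + (k - j)).choose (k - j) := by
            rw [hm, ← Nat.cast_add, show r + 1 + (m + 1) = (r + 1 + m) + 1 by omega,
              Nat.choose_succ_succ, show r + (m + 1) = r + 1 + m by omega]

/-- The `rankIn (N v) y` elements of `N v` below `y` all lie in `N y`, so one of them is `≥ w`. -/
theorem exists_reroute (hN : ∀ x y z, y ∈ N x → z ∈ N x → z < y → z ∈ N y) {v y w : W}
    (hy : y ∈ N v) (hw : w ∈ N y) (hlt : rankIn (N y) w < rankIn (N v) y) :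
    w ∈ N v ∨ ∃ z ∈ N v, rankIn (N v) z < rankIn (N v) y ∧ w ∈ N z := by
  obtain ⟨z, hz, hzw⟩ : ∃ z ∈ {a ∈ N v | a < y}, ¬ z < w := by
    by_contra! hall
    refine hlt.not_ge (card_le_card fun a ha => ?_)
    rw [mem_filter] at ha ⊢
    exact ⟨hN v y a hy ha.1 ha.2, hall a (mem_filter.2 ha)⟩
  rw [mem_filter] at hz
  rcases (not_lt.1 hzw).eq_or_lt with rfl | hwz
  · exact .inl hz.1
  · exact .inr ⟨z, hz.1, rankIn_strictMonoOn _ hz.1 hy hz.2,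
      hN y z w (hN v y z hy hz.1 hz.2) hw hwz⟩

theorem cons_of_mem (hN : ∀ x y z, y ∈ N x → z ∈ N x → z < y → z ∈ N y) {s : ℕ} :
    ∀ {v y u : W}, y ∈ N v → SortedReach N s 0 y u → SortedReach N (s + 1) 0 v u := by
  induction s with
  | zero => intro v y u hy h; rw [h.eq_of_zero]; exact .cons hy (Nat.zero_le _) (.refl _ _ _)
  | succ s ihs =>
    intro v y u hy h
    induction hrank : rankIn (N v) y using Nat.strong_induction_on generalizing y u with
    | _ t iht =>
    cases h with
    | refl => exact .cons hy (Nat.zero_le _) (.refl _ _ _)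
    | @cons _ _ _ w _ hw _ hrest =>
      by_cases hle : rankIn (N v) y ≤ rankIn (N y) w
      · exact .cons hy (Nat.zero_le _) (.cons hw hle hrest)
      rcases exists_reroute hN hy hw (not_le.1 hle) with hwv | ⟨z, hz, hzy, hwz⟩
      · exact (ihs hwv (hrest.mono le_rfl (Nat.zero_le _))).mono (by omega) le_rfl
      · exact iht _ (hrank ▸ hzy) hz (ihs hwz (hrest.mono le_rfl (Nat.zero_le _))) rfl

end SortedReach

end

section StrongRel

variable {α : Type} {G : SimpleGraph α} [L : LinearOrder α]

theorem strongRel_of_walk {x y : α} (p : G.Walk x y)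
    (h : ∀ w ∈ p.support, w ≠ y → w ≠ x → x < w) : StrongRel G L x y := by
  classical
  exact ⟨p.bypass, p.bypass_isPath, fun w hw => h w (p.support_bypass_subset_support hw)⟩

theorem strongRel_of_common_source {x y z : α} (hyx : y < x) (hy : StrongRel G L x y)
    (hz : StrongRel G L x z) : StrongRel G L y z := by
  obtain ⟨p, -, hp⟩ := hy
  obtain ⟨q, -, hq⟩ := hz
  refine strongRel_of_walk (p.reverse.append q) fun w hw hwz hwy => ?_
  by_cases hwx : w = x
  · exact hwx ▸ hyx
  rw [Walk.support_append, List.mem_append, Walk.support_reverse, List.mem_reverse] at hw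
  rcases hw with hw | hw
  · exact hyx.trans (hp w hw hwy hwx)
  · exact hyx.trans (hq w (List.mem_of_mem_tail hw) hwz hwx)

end StrongRel

open Classical in
noncomputable def backNbhd (G : SimpleGraph V) (L : LinearOrder V) (x : V) : Finset V :=
  {y | L.lt y x ∧ StrongRel G L x y}

section FillIn

variable {G : SimpleGraph V} [L : LinearOrder V]

theorem mem_backNbhd {x y : V} : y ∈ backNbhd G L x ↔ y < x ∧ StrongRel G L x y := by
  simp [backNbhd]

theorem mem_backNbhd_of_mem_of_lt {x y z : V} (hy : y ∈ backNbhd G L x) (hz : z ∈ backNbhd G L x)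
    (hzy : z < y) : z ∈ backNbhd G L y :=
  mem_backNbhd.2 ⟨hzy, strongRel_of_common_source (mem_backNbhd.1 hy).1 (mem_backNbhd.1 hy).2
    (mem_backNbhd.1 hz).2⟩

theorem fillIn_adj_of_mem_backNbhd {x y : V} (h : y ∈ backNbhd G L x) : (fillIn G L).Adj x y :=
  ⟨(mem_backNbhd.1 h).1.ne', .inr (mem_backNbhd.1 h)⟩

theorem card_backNbhd_le {k : ℕ}
    (hk : ∀ s : Finset V, (fillIn G L).IsClique (s : Set V) → s.card ≤ k + 1) (x : V) :
    #(backNbhd G L x) ≤ k := by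
  have hclique : (fillIn G L).IsClique ((insert x (backNbhd G L x) : Finset V) : Set V) := by
    rw [coe_insert, isClique_insert]
    refine ⟨fun a ha b hb hab => ?_, fun b hb _ => fillIn_adj_of_mem_backNbhd hb⟩
    rcases hab.lt_or_gt with h | h
    · exact (fillIn_adj_of_mem_backNbhd (mem_backNbhd_of_mem_of_lt hb ha h)).symm
    · exact fillIn_adj_of_mem_backNbhd (mem_backNbhd_of_mem_of_lt ha hb h)
  have := hk _ hclique
  rw [card_insert_of_notMem fun h => (mem_backNbhd.1 h).1.false] at this
  omega

/-- Induction along `p`, carrying a walk `q` from the current chain vertex `x` to the start of `p`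
that stays above `x`; the first vertex of `p` below `x` is then a member of `backNbhd G L x`. -/
theorem sortedReach_of_walk {a u : V} (p : G.Walk a u) (hp : ∀ w ∈ p.support, u ≤ w) {x : V}
    (q : G.Walk x a) (hq : ∀ w ∈ q.support, w ≠ x → x < w) (hux : u ≤ x) :
    SortedReach (backNbhd G L) (q.length + p.length) 0 x u := by
  induction p generalizing x with
  | @nil a =>
    by_cases hxa : x = a
    · subst hxa; exact .refl _ _ _
    · exact absurd (hq _ q.end_mem_support (Ne.symm hxa)) hux.not_gt
  | @cons a b u hadj p ih =>
    have hp' : ∀ w ∈ p.support, u ≤ w := fun w hw => hp w (List.mem_cons_of_mem _ hw)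
    have hqb : ∀ w ∈ (q.concat hadj).support, w ≠ b → w ≠ x → x < w := by
      intro w hw hwb hwx
      rw [Walk.support_concat, List.mem_append, List.mem_singleton] at hw
      exact hw.elim (hq w · hwx) (absurd · hwb)
    by_cases hbx : b < x
    · have hb : b ∈ backNbhd G L x := mem_backNbhd.2 ⟨hbx, strongRel_of_walk _ hqb⟩
      have hbu := ih hp' .nil (by simp) (hp' b p.start_mem_support)
      refine (SortedReach.cons_of_mem (fun _ _ _ => mem_backNbhd_of_mem_of_lt) hb hbu).mono
        ?_ le_rfl
      simp only [Walk.length_nil, Walk.length_cons]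
      omega
    · have hxb : ∀ w ∈ (q.concat hadj).support, w ≠ x → x < w := fun w hw hwx =>
        if hwb : w = b then hwb ▸ lt_of_le_of_ne (not_lt.1 hbx) (hwb ▸ hwx).symm
        else hqb w hw hwb hwx
      refine (ih hp' (q.concat hadj) hxb hux).mono ?_ le_rfl
      rw [Walk.length_concat, Walk.length_cons]
      omega

theorem wreach_subset_sortedReach (r : ℕ) (v : V) :
    WReach G L r v ⊆ {u | SortedReach (backNbhd G L) r 0 v u} := by
  rintro u ⟨p, -, hlen, hp⟩
  exact (sortedReach_of_walk p hp .nil (by simp) (hp v p.start_mem_support)).mono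
    (by simpa using hlen) le_rfl

end FillIn

/-- **Theorem (Grohe et al.).** If the elimination width of `L` is at most `k`
(every clique of the fill-in has at most `k+1` vertices), then every vertex
weakly `r`-reaches at most `(r+k).choose k` vertices. -/
theorem wreach_le_of_elimination_width (G : SimpleGraph V) (L : LinearOrder V) (k : ℕ)
    (hk : ∀ s : Finset V, (fillIn G L).IsClique (s : Set V) → s.card ≤ k + 1)
    (r : ℕ) (v : V) :
    (WReach G L r v).ncard ≤ (r + k).choose k := by
  let _ := L
  have hcount := SortedReach.encard_setOf_le (card_backNbhd_le hk) r 0 v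
  rw [Nat.sub_zero] at hcount
  have := (Set.encard_le_encard (wreach_subset_sortedReach r v)).trans hcount
  rwa [← (Set.toFinite _).cast_ncard_eq, Nat.cast_le] at this
end

section
/- Let G be a finite connected graph and let (H_1, ..., H_ℓ) be a connected decomposition of G of width k (the vertex sets of the H_i partition V(G), each H_i is connected, and for every i and every component C of G minus the first i parts, at most k of the parts H_1,...,H_i have an edge to C). Then the graph H obtained from G by contracting each H_i to a single vertex has tree-width at most k. -/
open SimpleGraph

variable {V : Type} [Fintype V]

/-- The vertex sets `H 0, …, H (ℓ-1)` form a partition of `V`. -/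
def IsDecomp {ℓ : ℕ} (H : Fin ℓ → Set V) : Prop :=
  (∀ i, (H i).Nonempty) ∧ (∀ i j, i ≠ j → Disjoint (H i) (H j)) ∧ (∀ v : V, ∃ i, v ∈ H i)

/-- The union of the parts strictly before `i`. -/
def before {ℓ : ℕ} (H : Fin ℓ → Set V) (i : Fin ℓ) : Set V :=
  {v | ∃ j, j < i ∧ v ∈ H j}

/-- `C` is a (connected) component of `G − U`. -/
def IsCompOf (G : SimpleGraph V) (U C : Set V) : Prop :=
  C.Nonempty ∧ Disjoint C U ∧ (G.induce C).Connected ∧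
    ∀ u ∈ C, ∀ v : V, v ∉ U → G.Adj u v → v ∈ C

/-- There is an edge of `G` between `A` and `C`. -/
def LinkedTo (G : SimpleGraph V) (A C : Set V) : Prop :=
  ∃ u ∈ A, ∃ v ∈ C, G.Adj u v

/-- The decomposition has width at most `k`: for every `i` and every component
`C` of `G` minus the parts before `i`, at most `k` of the earlier parts have an
edge to `C`. -/
def WidthLE (G : SimpleGraph V) {ℓ : ℕ} (H : Fin ℓ → Set V) (k : ℕ) : Prop :=
  ∀ i : Fin ℓ, ∀ C : Set V, IsCompOf G (before H i) C →
    {j : Fin ℓ | j < i ∧ LinkedTo G (H j) C}.ncard ≤ k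

/-- The decomposition is `f`-flat: each part `H i` `f`-spreads on the graph
obtained by deleting the earlier parts, i.e. for every `r` and every vertex `v`
outside the earlier parts, at most `f r` vertices of `H i` are reachable from
`v` by a walk of length at most `r` avoiding the earlier parts. -/
def IsFlat (G : SimpleGraph V) {ℓ : ℕ} (H : Fin ℓ → Set V) (f : ℕ → ℕ) : Prop :=
  ∀ i : Fin ℓ, ∀ r : ℕ, ∀ v : V, v ∉ before H i →
    {u | u ∈ H i ∧ ∃ p : G.Walk v u, p.length ≤ r ∧
      ∀ w ∈ p.support, w ∉ before H i}.ncard ≤ f r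

/-- Every part induces a connected subgraph. -/
def IsConnectedDecomp (G : SimpleGraph V) {ℓ : ℕ} (H : Fin ℓ → Set V) : Prop :=
  ∀ i, (G.induce (H i)).Connected

/-- `P` is the vertex set of an isometric path of `G` inside `S`: a path whose
support lies in `S` and which is a shortest among all walks in `S` between its
endpoints. -/
def IsIsomPathIn (G : SimpleGraph V) (S P : Set V) : Prop :=
  ∃ (x y : V) (p : G.Walk x y), p.IsPath ∧ (∀ w ∈ p.support, w ∈ S) ∧
    P = {w | w ∈ p.support} ∧
    ∀ q : G.Walk x y, (∀ w ∈ q.support, w ∈ S) → p.length ≤ q.length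

/-- `G` has a tree-decomposition of width at most `k`: a finite tree `T` with
bags `X t` covering all vertices and edges, such that every vertex induces a
connected subtree, and every bag has at most `k+1` vertices. -/
def HasTreeDecompOfWidthLE (G : SimpleGraph V) (k : ℕ) : Prop :=
  ∃ (ι : Type) (_ : Fintype ι) (T : SimpleGraph ι) (X : ι → Finset V),
    T.IsTree ∧
    (∀ v : V, ∃ t, v ∈ X t) ∧
    (∀ u v : V, G.Adj u v → ∃ t, u ∈ X t ∧ v ∈ X t) ∧
    (∀ v : V, (T.induce {t | v ∈ X t}).Connected) ∧
    (∀ t, (X t).card ≤ k + 1)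

/-- The tree-width of a finite graph. -/
noncomputable def treewidth (G : SimpleGraph V) : ℕ :=
  sInf {k | HasTreeDecompOfWidthLE G k}


/-! The tree is the parent tree on the parts. Let `Cᵢ` be the component of `G` minus the parts
before `i` that contains `H i`. The bag of part `i` consists of `i` and the earlier parts with an
edge to `Cᵢ` (at most `k` of them, by the width bound), and the parent `p i` of `i` is the last of
those earlier parts. As `Cᵢ` is linked to the connected part `H (p i)`, it lies in `C (p i)`; hence
every earlier part linked to `Cᵢ` is also in the bag of `p i`, so the bags containing a given part
form a subtree. -/

namespace SimpleGraph

section ParentGraph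

variable {ι : Type*} [LinearOrder ι] {P : ι → ι} {s : Set ι} {r t a : ι}

def parentGraph (P : ι → ι) : SimpleGraph ι :=
  fromRel fun a b => a = P b

theorem parentGraph_adj_parent (h : P t < t) : (parentGraph P).Adj t (P t) :=
  (fromRel_adj _ _ _).mpr ⟨h.ne', Or.inr rfl⟩

theorem eq_parent_of_parentGraph_adj (hP : ∀ t, P t ≤ t) (h : (parentGraph P).Adj t a)
    (ha : a ≤ t) : a = P t := by
  obtain ⟨hne, rfl | rfl⟩ := (fromRel_adj _ _ _).mp h
  · exact absurd (le_antisymm ha (hP a)) hne.symm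
  · rfl

theorem parentGraph_isAcyclic (hP : ∀ t, P t ≤ t) : (parentGraph P).IsAcyclic := by
  intro v c hc
  obtain ⟨m, hm, hmax⟩ := c.support.toFinset.exists_max_image id ⟨v, by simp⟩
  rw [List.mem_toFinset] at hm
  -- In the cycle rotated to start at its largest node `m`, both neighbours of `m` are `P m`.
  have hc' := hc.rotate hm
  have below : ∀ n, (c.rotate m hm).getVert n ≤ m := fun n => hmax _ <|
    List.mem_toFinset.mpr ((c.mem_support_rotate_iff m hm).mp (Walk.getVert_mem_support _ n))
  have hsnd := eq_parent_of_parentGraph_adj hP (Walk.adj_snd hc'.not_nil) (below 1)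
  have hpen := eq_parent_of_parentGraph_adj hP (Walk.adj_penultimate hc'.not_nil).symm (below _)
  exact hc'.snd_ne_penultimate (hsnd.trans hpen.symm)

theorem parentGraph_induce_connected [WellFoundedLT ι] (hr : r ∈ s)
    (hs : ∀ t ∈ s, t ≠ r → P t < t ∧ P t ∈ s) : ((parentGraph P).induce s).Connected := by
  have reach : ∀ t (ht : t ∈ s), ((parentGraph P).induce s).Reachable ⟨r, hr⟩ ⟨t, ht⟩ := by
    intro t
    induction t using WellFoundedLT.induction with
    | _ t ih =>
      intro ht
      by_cases htr : t = r
      · subst htr; rfl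
      obtain ⟨hlt, hmem⟩ := hs t ht htr
      have hadj : ((parentGraph P).induce s).Adj ⟨P t, hmem⟩ ⟨t, ht⟩ :=
        (parentGraph_adj_parent hlt).symm
      exact (ih _ hlt hmem).trans hadj.reachable
  exact (connected_iff_exists_forall_reachable _).mpr ⟨⟨r, hr⟩, fun t => reach t t.2⟩

theorem parentGraph_isTree [WellFoundedLT ι] (r : ι) (hle : ∀ t, P t ≤ t)
    (hlt : ∀ t, t ≠ r → P t < t) : (parentGraph P).IsTree := by
  refine ⟨?_, parentGraph_isAcyclic hle⟩
  have := parentGraph_induce_connected (s := Set.univ) (Set.mem_univ r)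
    fun t _ htr => ⟨hlt t htr, Set.mem_univ _⟩
  exact (induceUnivIso _).connected_iff.mp this

end ParentGraph

section ComponentContaining

variable {V : Type} {G : SimpleGraph V} {U U' A B C s : Set V}

/-- For `A` nonempty, connected and disjoint from `U`: the component of `G - U` containing `A`. -/
def componentContaining (G : SimpleGraph V) (U A : Set V) : Set V :=
  ⋃₀ {s | A ⊆ s ∧ Disjoint s U ∧ (G.induce s).Connected}

theorem subset_componentContaining (hAs : A ⊆ s) (hsU : Disjoint s U)
    (hs : (G.induce s).Connected) : s ⊆ G.componentContaining U A :=
  Set.subset_sUnion_of_mem ⟨hAs, hsU, hs⟩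

theorem disjoint_componentContaining : Disjoint (G.componentContaining U A) U :=
  Set.disjoint_sUnion_left.mpr fun _ hs => hs.2.1

theorem isCompOf_componentContaining (hA : A.Nonempty) (hAU : Disjoint A U)
    (hAc : (G.induce A).Connected) : IsCompOf G U (G.componentContaining U A) := by
  refine ⟨hA.mono (subset_componentContaining subset_rfl hAU hAc), disjoint_componentContaining,
    ?_, ?_⟩
  · exact induce_sUnion_connected_of_pairwise_not_disjoint ⟨A, subset_rfl, hAU, hAc⟩
      (fun hs ht => hA.mono (Set.subset_inter hs.1 ht.1)) fun hs => hs.2.2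
  · rintro u ⟨s, ⟨hAs, hsU, hs⟩, hus⟩ v hvU huv
    have hconn : (G.induce (s ∪ {u, v})).Connected :=
      induce_union_connected hs.preconnected (induce_pair_connected_of_adj huv).preconnected
        ⟨u, hus, Set.mem_insert u _⟩
    have hdisj : Disjoint (s ∪ {u, v}) U := by
      simp [hsU, Set.disjoint_left.mp hsU hus, hvU]
    exact subset_componentContaining (hAs.trans Set.subset_union_left) hdisj hconn (by simp)

theorem subset_componentContaining_of_linkedTo (hC : IsCompOf G U C) (hU : U' ⊆ U)
    (hBU : Disjoint B U') (hB : (G.induce B).Connected) (hlink : LinkedTo G B C) :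
    C ⊆ G.componentContaining U' B := by
  obtain ⟨u, hu, v, hv, huv⟩ := hlink
  have hconn : (G.induce (B ∪ C)).Connected :=
    connected_induce_union hB.preconnected hC.2.2.1.preconnected hu hv huv
  refine Set.subset_union_right.trans (subset_componentContaining Set.subset_union_left ?_ hconn)
  exact Set.disjoint_union_left.mpr ⟨hBU, hC.2.1.mono_right hU⟩

end ComponentContaining

end SimpleGraph

theorem hasTreeDecompOfWidthLE_of_isEmpty {V : Type} [IsEmpty V] (G : SimpleGraph V) (k : ℕ) :
    HasTreeDecompOfWidthLE G k :=
  ⟨Unit, inferInstance, ⊥, fun _ => ∅, .of_subsingleton, isEmptyElim, fun u => isEmptyElim u,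
    isEmptyElim, fun _ => by simp⟩

section Decomposition

variable {V : Type} {G : SimpleGraph V} {ℓ : ℕ} {H : Fin ℓ → Set V} {k : ℕ} {A C : Set V}
  {i j : Fin ℓ}

/-- The graph `G/𝓗` obtained by contracting every part. -/
def contraction (G : SimpleGraph V) (H : Fin ℓ → Set V) : SimpleGraph (Fin ℓ) :=
  fromRel fun i j => LinkedTo G (H i) (H j)

theorem LinkedTo.symm (h : LinkedTo G A C) : LinkedTo G C A := by
  obtain ⟨u, hu, v, hv, huv⟩ := h
  exact ⟨v, hv, u, hu, huv.symm⟩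

theorem LinkedTo.mono_right {C' : Set V} (hC : C ⊆ C') (h : LinkedTo G A C) : LinkedTo G A C' := by
  obtain ⟨u, hu, v, hv, huv⟩ := h
  exact ⟨u, hu, v, hC hv, huv⟩

theorem before_mono (hij : i ≤ j) : before H i ⊆ before H j :=
  fun _ ⟨j', hj', hv⟩ => ⟨j', hj'.trans_le hij, hv⟩

theorem IsDecomp.disjoint_before (hdec : IsDecomp H) (i : Fin ℓ) : Disjoint (H i) (before H i) :=
  Set.disjoint_right.mpr fun _ ⟨j, hj, hvj⟩ hvi => Set.disjoint_left.mp (hdec.2.1 j i hj.ne) hvj hvi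

def partComponent (G : SimpleGraph V) (H : Fin ℓ → Set V) (i : Fin ℓ) : Set V :=
  G.componentContaining (before H i) (H i)

theorem subset_partComponent (hdec : IsDecomp H) (hconn : IsConnectedDecomp G H) (i : Fin ℓ) :
    H i ⊆ partComponent G H i :=
  subset_componentContaining subset_rfl (hdec.disjoint_before i) (hconn i)

theorem isCompOf_partComponent (hdec : IsDecomp H) (hconn : IsConnectedDecomp G H) (i : Fin ℓ) :
    IsCompOf G (before H i) (partComponent G H i) :=
  isCompOf_componentContaining (hdec.1 i) (hdec.disjoint_before i) (hconn i)

theorem partComponent_subset_of_linkedTo (hdec : IsDecomp H) (hconn : IsConnectedDecomp G H)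
    (hji : j < i) (hlink : LinkedTo G (H j) (partComponent G H i)) :
    partComponent G H i ⊆ partComponent G H j :=
  subset_componentContaining_of_linkedTo (isCompOf_partComponent hdec hconn i)
    (before_mono hji.le) (hdec.disjoint_before j) (hconn j) hlink

open Classical in
noncomputable def attachedParts (G : SimpleGraph V) (H : Fin ℓ → Set V) (i : Fin ℓ) :
    Finset (Fin ℓ) :=
  {j | j < i ∧ LinkedTo G (H j) (partComponent G H i)}

theorem mem_attachedParts :
    j ∈ attachedParts G H i ↔ j < i ∧ LinkedTo G (H j) (partComponent G H i) := by
  simp [attachedParts]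

theorem card_attachedParts_le (hdec : IsDecomp H) (hconn : IsConnectedDecomp G H)
    (hw : WidthLE G H k) (i : Fin ℓ) : (attachedParts G H i).card ≤ k := by
  have hcoe : (attachedParts G H i : Set (Fin ℓ)) =
      {j | j < i ∧ LinkedTo G (H j) (partComponent G H i)} := by
    ext; simp [mem_attachedParts]
  rw [← Set.ncard_coe_finset, hcoe]
  exact hw i _ (isCompOf_partComponent hdec hconn i)

theorem mem_attachedParts_of_linkedTo (hdec : IsDecomp H) (hconn : IsConnectedDecomp G H)
    (hji : j < i) (h : LinkedTo G (H j) (H i)) : j ∈ attachedParts G H i :=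
  mem_attachedParts.mpr ⟨hji, h.mono_right (subset_partComponent hdec hconn i)⟩

theorem mem_attachedParts_of_mem_of_lt {i' : Fin ℓ} (hdec : IsDecomp H)
    (hconn : IsConnectedDecomp G H) (hj : j ∈ attachedParts G H i)
    (hi' : i' ∈ attachedParts G H i) (hji' : j < i') : j ∈ attachedParts G H i' := by
  obtain ⟨hi'i, hlink⟩ := mem_attachedParts.mp hi'
  exact mem_attachedParts.mpr ⟨hji',
    (mem_attachedParts.mp hj).2.mono_right (partComponent_subset_of_linkedTo hdec hconn hi'i hlink)⟩

noncomputable def partBag (G : SimpleGraph V) (H : Fin ℓ → Set V) (i : Fin ℓ) : Finset (Fin ℓ) :=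
  insert i (attachedParts G H i)

theorem mem_partBag : j ∈ partBag G H i ↔ j = i ∨ j ∈ attachedParts G H i :=
  Finset.mem_insert

theorem mem_partBag_self (i : Fin ℓ) : i ∈ partBag G H i :=
  Finset.mem_insert_self _ _

theorem mem_partBag_of_mem_attachedParts (hj : j ∈ attachedParts G H i) : j ∈ partBag G H i :=
  Finset.mem_insert_of_mem hj

theorem card_partBag_le (hdec : IsDecomp H) (hconn : IsConnectedDecomp G H)
    (hw : WidthLE G H k) (i : Fin ℓ) : (partBag G H i).card ≤ k + 1 :=
  (Finset.card_insert_le _ _).trans (Nat.add_le_add_right (card_attachedParts_le hdec hconn hw i) 1)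

theorem exists_partBag_of_adj (hdec : IsDecomp H) (hconn : IsConnectedDecomp G H)
    (hadj : (contraction G H).Adj i j) : ∃ t, i ∈ partBag G H t ∧ j ∈ partBag G H t := by
  obtain ⟨hij, h⟩ := (fromRel_adj _ _ _).mp hadj
  have hlink : LinkedTo G (H i) (H j) := h.elim id LinkedTo.symm
  rcases hij.lt_or_gt with hlt | hlt
  · exact ⟨j, mem_partBag_of_mem_attachedParts (mem_attachedParts_of_linkedTo hdec hconn hlt hlink),
      mem_partBag_self _⟩
  · exact ⟨i, mem_partBag_self _,
      mem_partBag_of_mem_attachedParts (mem_attachedParts_of_linkedTo hdec hconn hlt hlink.symm)⟩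

variable [NeZero ℓ]

/-- This is `0` when no earlier part is attached to part `i`. -/
noncomputable def partParent (G : SimpleGraph V) (H : Fin ℓ → Set V) (i : Fin ℓ) : Fin ℓ :=
  (attachedParts G H i).sup id

theorem partParent_le : partParent G H i ≤ i :=
  Finset.sup_le fun _ hj => (mem_attachedParts.mp hj).1.le

theorem partParent_lt (hi : i ≠ ⊥) : partParent G H i < i :=
  (Finset.sup_lt_iff (bot_lt_iff_ne_bot.mpr hi)).mpr fun _ hj => (mem_attachedParts.mp hj).1

theorem mem_partBag_partParent (hdec : IsDecomp H) (hconn : IsConnectedDecomp G H)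
    (hj : j ∈ attachedParts G H i) : j ∈ partBag G H (partParent G H i) := by
  have hle : j ≤ partParent G H i := Finset.le_sup (f := id) hj
  rcases hle.eq_or_lt with heq | hlt
  · exact heq ▸ mem_partBag_self _
  obtain ⟨p, hp, hpeq⟩ := Finset.exists_mem_eq_sup _ ⟨j, hj⟩ id
  have hp' : partParent G H i ∈ attachedParts G H i := by
    rwa [partParent, hpeq]
  exact mem_partBag_of_mem_attachedParts (mem_attachedParts_of_mem_of_lt hdec hconn hj hp' hlt)

theorem partBag_induce_connected (hdec : IsDecomp H) (hconn : IsConnectedDecomp G H) (j : Fin ℓ) :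
    ((parentGraph (partParent G H)).induce {t | j ∈ partBag G H t}).Connected := by
  refine parentGraph_induce_connected (r := j) (mem_partBag_self j) fun t ht htj => ?_
  have hj : j ∈ attachedParts G H t := (mem_partBag.mp ht).resolve_left (Ne.symm htj)
  exact ⟨partParent_lt (ne_bot_of_gt (mem_attachedParts.mp hj).1),
    mem_partBag_partParent hdec hconn hj⟩

theorem hasTreeDecompOfWidthLE_contraction (hdec : IsDecomp H) (hconn : IsConnectedDecomp G H)
    (hw : WidthLE G H k) :
    HasTreeDecompOfWidthLE (contraction G H) k :=
  ⟨Fin ℓ, inferInstance, parentGraph (partParent G H), partBag G H,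
    parentGraph_isTree ⊥ (fun _ => partParent_le) fun _ => partParent_lt,
    fun i => ⟨i, mem_partBag_self _⟩,
    fun _ _ => exists_partBag_of_adj hdec hconn,
    partBag_induce_connected hdec hconn, card_partBag_le hdec hconn hw⟩

end Decomposition

theorem treewidth_contraction_le_general (G : SimpleGraph V)
    {ℓ : ℕ} (H : Fin ℓ → Set V) (k : ℕ)
    (hdec : IsDecomp H) (hconn : IsConnectedDecomp G H) (hw : WidthLE G H k) :
    treewidth (SimpleGraph.fromRel fun i j : Fin ℓ => LinkedTo G (H i) (H j)) ≤ k := by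
  apply Nat.sInf_le
  cases ℓ with
  | zero => exact hasTreeDecompOfWidthLE_of_isEmpty _ k
  | succ ℓ => exact hasTreeDecompOfWidthLE_contraction hdec hconn hw

/-- **Lemma 3.1.** Contracting each part of a connected decomposition of width
`k` of a connected graph `G` yields a graph of tree-width at most `k`. -/
theorem treewidth_contraction_le (G : SimpleGraph V) (hG : G.Connected)
    {ℓ : ℕ} (H : Fin ℓ → Set V) (k : ℕ)
    (hdec : IsDecomp H) (hconn : IsConnectedDecomp G H) (hw : WidthLE G H k) :
    treewidth (SimpleGraph.fromRel fun i j : Fin ℓ => LinkedTo G (H i) (H j)) ≤ k :=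
  treewidth_contraction_le_general G H k hdec hconn hw
end

section
/- Let f : ℕ → ℕ and let G be a finite graph admitting an f-flat decomposition of width k. Then for every r ∈ ℕ, col_r(G) ≤ (k+1)·f(r). -/
open SimpleGraph

variable {V : Type} [Fintype V]

/-! Order the vertices part by part. A vertex `u` strongly `r`-reachable from `v ∈ H i` lies
in a part `H j` with `j ≤ i`, via a path whose other vertices lie in parts `≥ i`; so `u` is
within distance `r` of `v` in `G` minus the parts before `j`, and flatness of `H j` leaves at
most `f r` choices of `u` for each `j`. If `j < i`, the last edge of the path joins `H j` to
the component of `v` in `G` minus the parts before `i`, and there are at most `k` such `j`. -/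

theorem exists_linearOrder_le_imp_le {α ι : Type*} [LinearOrder ι] (g : α → ι) :
    ∃ L : LinearOrder α, ∀ a b, L.le a b → g a ≤ g b := by
  let : LinearOrder α := IsWellOrder.linearOrder WellOrderingRel
  have hinj : Function.Injective fun a => toLex (g a, a) := fun a b hab => congrArg Prod.snd hab
  exact ⟨LinearOrder.lift' _ hinj, fun a b hab => Prod.Lex.monotone_fst _ _ hab⟩

theorem Set.ncard_le_ncard_mul_of_subset_biUnion {α ι : Type*} [Finite α] {s : Set α}
    {t : Set ι} {A : ι → Set α} {m : ℕ} (ht : t.Finite) (hs : s ⊆ ⋃ j ∈ t, A j)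
    (hA : ∀ j ∈ t, (A j).ncard ≤ m) : s.ncard ≤ t.ncard * m := by
  lift t to Finset ι using ht
  calc s.ncard ≤ (⋃ j ∈ t, A j).ncard := Set.ncard_le_ncard hs
    _ ≤ ∑ j ∈ t, (A j).ncard := t.set_ncard_biUnion_le A
    _ ≤ t.card * m := by simpa using Finset.sum_le_card_nsmul t _ m hA
    _ = (t : Set ι).ncard * m := by rw [Set.ncard_coe_finset]

section

variable {α : Type} {G : SimpleGraph α} {U : Set α} {v : α}

/-- The component of `v` in `G - U` (empty if `v ∈ U`). -/
def componentAvoiding (G : SimpleGraph α) (U : Set α) (v : α) : Set α :=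
  {w | ∃ p : G.Walk v w, ∀ x ∈ p.support, x ∉ U}

def ballAvoiding (G : SimpleGraph α) (U : Set α) (r : ℕ) (v : α) : Set α :=
  {w | ∃ p : G.Walk v w, p.length ≤ r ∧ ∀ x ∈ p.support, x ∉ U}

theorem self_mem_componentAvoiding (hv : v ∉ U) : v ∈ componentAvoiding G U v :=
  ⟨.nil, by simpa using hv⟩

theorem mem_componentAvoiding_of_adj {c w : α} (hv : v ∉ U) (h : G.Adj v c)
    (hw : w ∈ componentAvoiding G U c) : w ∈ componentAvoiding G U v := by
  obtain ⟨p, hp⟩ := hw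
  refine ⟨.cons h p, fun x hx => ?_⟩
  rw [Walk.support_cons, List.mem_cons] at hx
  rcases hx with rfl | hx
  exacts [hv, hp x hx]

theorem SimpleGraph.Walk.support_subset_componentAvoiding {w : α} (p : G.Walk v w)
    (hp : ∀ x ∈ p.support, x ∉ U) : ∀ x ∈ p.support, x ∈ componentAvoiding G U v := by
  classical
  exact fun x hx => ⟨p.takeUntil x hx, fun y hy => hp y (p.support_takeUntil_subset_support hx hy)⟩

theorem isCompOf_componentAvoiding (hv : v ∉ U) : IsCompOf G U (componentAvoiding G U v) := by
  refine ⟨⟨v, self_mem_componentAvoiding hv⟩, ?_, ?_, ?_⟩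
  · exact Set.disjoint_left.2 fun w ⟨p, hp⟩ => hp w p.end_mem_support
  · rw [connected_iff_exists_forall_reachable]
    refine ⟨⟨v, self_mem_componentAvoiding hv⟩, fun ⟨w, p, hp⟩ => ?_⟩
    exact (p.induce _ (p.support_subset_componentAvoiding hp)).reachable
  · rintro u ⟨p, hp⟩ w hw huw
    refine ⟨p.concat huw, fun x hx => ?_⟩
    rw [Walk.support_concat, List.mem_append, List.mem_singleton] at hx
    rcases hx with hx | rfl
    exacts [hp x hx, hw]

/-- The first edge by which a walk from outside `U` enters `U`. -/
theorem SimpleGraph.Walk.exists_adj_componentAvoiding :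
    ∀ {v u : α} (p : G.Walk v u), v ∉ U → u ∈ U →
      ∃ a ∈ componentAvoiding G U v, ∃ b ∈ p.support, b ∈ U ∧ G.Adj a b
  | _, _, .nil, hv, hu => absurd hu hv
  | v, _, .cons (v := c) h q, hv, hu => by
    by_cases hc : c ∈ U
    · exact ⟨v, self_mem_componentAvoiding hv, c, by simp, hc, h⟩
    · obtain ⟨a, ha, b, hb, hbU, hab⟩ := q.exists_adj_componentAvoiding hc hu
      exact ⟨a, mem_componentAvoiding_of_adj hv h ha, b, by simp [hb], hbU, hab⟩

end

section

variable {α : Type} {ℓ : ℕ} {H : Fin ℓ → Set α}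

theorem IsDecomp.exists_index (hdec : IsDecomp H) : ∃ idx : α → Fin ℓ, ∀ v j, v ∈ H j ↔ idx v = j := by
  obtain ⟨-, hdisj, hcov⟩ := hdec
  choose idx hidx using hcov
  refine ⟨idx, fun v j => ⟨fun hv => ?_, fun h => h ▸ hidx v⟩⟩
  by_contra hne
  exact Set.disjoint_left.1 (hdisj j (idx v) (Ne.symm hne)) hv (hidx v)

variable {idx : α → Fin ℓ}

theorem mem_before_iff (hidx : ∀ v j, v ∈ H j ↔ idx v = j) {v : α} {i : Fin ℓ} :
    v ∈ before H i ↔ idx v < i := by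
  simp [before, hidx]

end

section

variable {α : Type} {G : SimpleGraph α} {ℓ : ℕ} {H : Fin ℓ → Set α} {idx : α → Fin ℓ}
  {r : ℕ} {u v : α}

theorem exists_walk_of_mem_sReach {L : LinearOrder α} (hL : ∀ a b, L.le a b → idx a ≤ idx b)
    (hu : u ∈ SReach G L r v) :
    ∃ p : G.Walk v u, p.length ≤ r ∧ idx u ≤ idx v ∧ ∀ w ∈ p.support, w ≠ u → idx v ≤ idx w := by
  obtain ⟨p, -, hlen, huv, hp⟩ := hu
  refine ⟨p, hlen, hL _ _ huv, fun w hw hwu => ?_⟩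
  by_cases hwv : w = v
  · rw [hwv]
  · exact hL _ _ (hp w hw hwu hwv).le

variable (hidx : ∀ v j, v ∈ H j ↔ idx v = j) {p : G.Walk v u}
include hidx

theorem mem_inter_ballAvoiding_before (hlen : p.length ≤ r) (hu : idx u ≤ idx v)
    (hp : ∀ w ∈ p.support, w ≠ u → idx v ≤ idx w) :
    u ∈ H (idx u) ∩ ballAvoiding G (before H (idx u)) r v := by
  refine ⟨(hidx u _).2 rfl, p, hlen, fun w hw => ?_⟩
  rw [mem_before_iff hidx, not_lt]
  by_cases hwu : w = u
  · rw [hwu]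
  · exact hu.trans (hp w hw hwu)

theorem linkedTo_componentAvoiding (hu : idx u < idx v)
    (hp : ∀ w ∈ p.support, w ≠ u → idx v ≤ idx w) :
    LinkedTo G (H (idx u)) (componentAvoiding G (before H (idx v)) v) := by
  have hv : v ∉ before H (idx v) := by simp [mem_before_iff hidx]
  obtain ⟨a, ha, b, hb, hbU, hab⟩ :=
    p.exists_adj_componentAvoiding hv ((mem_before_iff hidx).2 hu)
  obtain rfl : b = u := by
    by_contra hbu
    exact (hp b hb hbu).not_gt ((mem_before_iff hidx).1 hbU)
  exact ⟨b, (hidx b _).2 rfl, a, ha, hab.symm⟩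

theorem sReach_subset_biUnion {L : LinearOrder α} (hL : ∀ a b, L.le a b → idx a ≤ idx b) :
    SReach G L r v ⊆ ⋃ j ∈ insert (idx v)
      {j | j < idx v ∧ LinkedTo G (H j) (componentAvoiding G (before H (idx v)) v)},
      H j ∩ ballAvoiding G (before H j) r v := by
  intro u hu
  obtain ⟨p, hlen, hle, hp⟩ := exists_walk_of_mem_sReach hL hu
  refine Set.mem_biUnion ?_ (mem_inter_ballAvoiding_before hidx hlen hle hp)
  rcases hle.lt_or_eq with hlt | heq
  · exact Or.inr ⟨hlt, linkedTo_componentAvoiding hidx hlt hp⟩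
  · exact Or.inl heq

end

/-- **Lemma (flat decompositions bound col_r).** If `G` admits an `f`-flat
decomposition of width `k`, then `col_r(G) ≤ (k+1)·f(r)`. -/
theorem col_le_of_flat_decomp (G : SimpleGraph V) (f : ℕ → ℕ) (k : ℕ)
    {ℓ : ℕ} (H : Fin ℓ → Set V)
    (hdec : IsDecomp H) (hflat : IsFlat G H f) (hw : WidthLE G H k) (r : ℕ) :
    col G r ≤ (k + 1) * f r := by
  obtain ⟨idx, hidx⟩ := hdec.exists_index
  obtain ⟨L, hL⟩ := exists_linearOrder_le_imp_le idx
  refine Nat.sInf_le ⟨L, fun v => ?_⟩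
  have hv : v ∉ before H (idx v) := by simp [mem_before_iff hidx]
  let C := componentAvoiding G (before H (idx v)) v
  let J := {j | j < idx v ∧ LinkedTo G (H j) C}
  have hJ : J.ncard ≤ k := hw (idx v) C (isCompOf_componentAvoiding hv)
  calc (SReach G L r v).ncard ≤ (insert (idx v) J).ncard * f r := by
        refine Set.ncard_le_ncard_mul_of_subset_biUnion (Set.toFinite _)
          (sReach_subset_biUnion hidx hL) fun j hj => hflat j r v ?_
        rw [mem_before_iff hidx, not_lt]
        rcases hj with rfl | hj
        exacts [le_rfl, hj.1.le]
    _ ≤ (k + 1) * f r := by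
        gcongr
        exact (Set.ncard_insert_le _ _).trans (by omega)
end
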